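/- (Contraction of PPCM, Theorem 4.6.) Under the hypotheses of the prediction–correction scheme with criterion ‖H⁻¹ξ‖_H ≤ η‖u−ũ‖_H (η ∈ (0,1)), step size α = γα* with γ ∈ [1,2), and corrector u⁺ = u_{γα*}, one has for every solution u* of VI(Ω,F): ‖u⁺ − u*‖²_H ≤ ‖u − u*‖²_H − (γ(2−γ)(1−η²)/4)‖u − ũ‖²_H. -/

import Mathlib

/-!
Write `e = u - ũ`, `p = eᵀd` and `q = ‖H⁻¹d‖²_H`, so that `Φ(α) = 2αp - α²q` and `α* = p/q`.
Since `H⁻¹d = e - H⁻¹ξ`, one has `2p - q = ‖e‖²_H - ‖H⁻¹ξ‖²_H ≥ (1 - η²)‖e‖²_H > 0`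
by the criterion. As `α*` maximises `Φ`, `Φ(α*) = p²/q ≥ Φ(1) = 2p - q`, and
`Φ(γα*) = γ(2-γ)Φ(α*)` then gives the contraction through `Θ ≥ Φ`.
-/

open Matrix

theorem two_mul_mul_sub_sq_mul_of_div (p q γ : ℝ) (hq : q ≠ 0) :
    2 * (γ * (p / q)) * p - (γ * (p / q)) ^ 2 * q = γ * (2 - γ) * (p ^ 2 / q) := by
  field_simp

theorem two_mul_sub_le_sq_div {p q : ℝ} (hq : 0 < q) : 2 * p - q ≤ p ^ 2 / q := by
  rw [le_div_iff₀ hq]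
  nlinarith [sq_nonneg (p - q)]

theorem Real.le_sq_mul_of_sqrt_le_mul_sqrt {a b η : ℝ} (ha : 0 ≤ a) (h : √b ≤ η * √a) :
    b ≤ η ^ 2 * a := by
  have hsq := (Real.sqrt_le_iff.mp h).2
  rwa [mul_pow, Real.sq_sqrt ha] at hsq

theorem Matrix.IsSymm.two_mul_dotProduct_sub_dotProduct_inv_mulVec
    {n R : Type*} [Fintype n] [DecidableEq n] [CommRing R] {H : Matrix n n R}
    (hsymm : H.IsSymm) (hdet : IsUnit H.det) (e ξ : n → R) :
    2 * (e ⬝ᵥ (H *ᵥ e - ξ)) - (H *ᵥ e - ξ) ⬝ᵥ H⁻¹ *ᵥ (H *ᵥ e - ξ)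
      = e ⬝ᵥ H *ᵥ e - ξ ⬝ᵥ H⁻¹ *ᵥ ξ := by
  have hinv : H⁻¹ *ᵥ (H *ᵥ e - ξ) = e - H⁻¹ *ᵥ ξ := by
    rw [mulVec_sub, mulVec_mulVec, nonsing_inv_mul H hdet, one_mulVec]
  have hcross : H *ᵥ e ⬝ᵥ H⁻¹ *ᵥ ξ = e ⬝ᵥ ξ := by
    rw [← hsymm.eq, mulVec_transpose, ← dotProduct_mulVec, hsymm.eq, mulVec_mulVec,
      mul_nonsing_inv H hdet, one_mulVec]
  rw [hinv]
  simp only [dotProduct_sub, sub_dotProduct, hcross]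
  rw [dotProduct_comm ξ e, dotProduct_comm (H *ᵥ e) e]
  ring

theorem ppcm_contraction_general
    (N : ℕ) (H : Matrix (Fin N) (Fin N) ℝ) (hH : H.PosDef)
    (η : ℝ) (hη1 : η < 1)
    (u ut ξ : Fin N → ℝ) (hne : u ≠ ut)
    (d : Fin N → ℝ) (hd : d = H.mulVec (u - ut) - ξ)
    (hcrit : Real.sqrt (ξ ⬝ᵥ H⁻¹.mulVec ξ) ≤ η * Real.sqrt ((u - ut) ⬝ᵥ H.mulVec (u - ut)))
    (ustar : Fin N → ℝ)
    (uα : ℝ → (Fin N → ℝ))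
    (hΘΦ : ∀ α : ℝ, 0 < α →
      ((u - ustar) ⬝ᵥ H.mulVec (u - ustar)) - ((uα α - ustar) ⬝ᵥ H.mulVec (uα α - ustar))
        ≥ 2 * α * ((u - ut) ⬝ᵥ d) - α ^ 2 * (d ⬝ᵥ H⁻¹.mulVec d))
    (αs : ℝ) (hαs : αs = ((u - ut) ⬝ᵥ d) / (d ⬝ᵥ H⁻¹.mulVec d))
    (γ : ℝ) (hγ1 : 1 ≤ γ) (hγ2 : γ < 2) :
    (uα (γ * αs) - ustar) ⬝ᵥ H.mulVec (uα (γ * αs) - ustar)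
      ≤ (u - ustar) ⬝ᵥ H.mulVec (u - ustar)
        - γ * (2 - γ) * (1 - η ^ 2) / 4 * ((u - ut) ⬝ᵥ H.mulVec (u - ut)) := by
  have ha : 0 < (u - ut) ⬝ᵥ H *ᵥ (u - ut) := by
    simpa using hH.dotProduct_mulVec_pos (sub_ne_zero.mpr hne)
  have hb : 0 ≤ ξ ⬝ᵥ H⁻¹ *ᵥ ξ := by simpa using hH.inv.posSemidef.dotProduct_mulVec_nonneg ξ
  have hb_le := Real.le_sq_mul_of_sqrt_le_mul_sqrt ha.le hcrit
  have hb_lt : ξ ⬝ᵥ H⁻¹ *ᵥ ξ < (u - ut) ⬝ᵥ H *ᵥ (u - ut) :=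
    (Real.sqrt_lt_sqrt_iff hb).mp
      (hcrit.trans_lt (mul_lt_of_lt_one_left (Real.sqrt_pos.mpr ha) hη1))
  have hkey : 2 * ((u - ut) ⬝ᵥ d) - d ⬝ᵥ H⁻¹ *ᵥ d
      = (u - ut) ⬝ᵥ H *ᵥ (u - ut) - ξ ⬝ᵥ H⁻¹ *ᵥ ξ := by
    subst hd
    exact IsSymm.two_mul_dotProduct_sub_dotProduct_inv_mulVec hH.isHermitian
      ((isUnit_iff_isUnit_det H).mp hH.isUnit) _ _
  have hq : 0 < d ⬝ᵥ H⁻¹ *ᵥ d := by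
    have hd0 : d ≠ 0 := by
      rintro rfl
      simp only [dotProduct_zero, zero_dotProduct, mul_zero, sub_zero] at hkey
      linarith
    simpa using hH.inv.dotProduct_mulVec_pos hd0
  have hp : 0 < (u - ut) ⬝ᵥ d := by linarith
  subst hαs
  have hgain := hΘΦ (γ * _) (mul_pos (by linarith) (div_pos hp hq))
  rw [two_mul_mul_sub_sq_mul_of_div _ _ γ hq.ne'] at hgain
  have hbound : (1 - η ^ 2) / 4 * ((u - ut) ⬝ᵥ H *ᵥ (u - ut))
      ≤ ((u - ut) ⬝ᵥ d) ^ 2 / d ⬝ᵥ H⁻¹ *ᵥ d := by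
    linarith [two_mul_sub_le_sq_div (p := (u - ut) ⬝ᵥ d) hq]
  have hγ : 0 ≤ γ * (2 - γ) := mul_nonneg (by linarith) (by linarith)
  linarith [mul_le_mul_of_nonneg_left hbound hγ]

/-- Contraction of PPCM (Theorem 4.6): under the criterion `‖H⁻¹ξ‖_H ≤ η‖u - ũ‖_H`
(`η ∈ (0,1)`), with `d = H(u - ũ) - ξ`, optimal step `α* = (u - ũ)ᵀd/‖H⁻¹d‖²_H`, the
lower bound `Θ(α) ≥ Φ(α) = 2α(u - ũ)ᵀd - α²‖H⁻¹d‖²_H`, step size `γα*` with `γ ∈ [1,2)`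
and corrector `u⁺ = u_{γα*}`, one has for every VI solution `u*`:
`‖u⁺ - u*‖²_H ≤ ‖u - u*‖²_H - (γ(2-γ)(1-η²)/4)‖u - ũ‖²_H`. -/
theorem ppcm_contraction
    (N : ℕ) (H : Matrix (Fin N) (Fin N) ℝ) (hH : H.PosDef)
    (η : ℝ) (hη0 : 0 < η) (hη1 : η < 1)
    (u ut ξ : Fin N → ℝ) (hne : u ≠ ut)
    (d : Fin N → ℝ) (hd : d = H.mulVec (u - ut) - ξ)
    (hcrit : Real.sqrt (ξ ⬝ᵥ H⁻¹.mulVec ξ) ≤ η * Real.sqrt ((u - ut) ⬝ᵥ H.mulVec (u - ut)))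
    (ustar : Fin N → ℝ)
    (uα : ℝ → (Fin N → ℝ))
    (hΘΦ : ∀ α : ℝ, 0 < α →
      ((u - ustar) ⬝ᵥ H.mulVec (u - ustar)) - ((uα α - ustar) ⬝ᵥ H.mulVec (uα α - ustar))
        ≥ 2 * α * ((u - ut) ⬝ᵥ d) - α ^ 2 * (d ⬝ᵥ H⁻¹.mulVec d))
    (αs : ℝ) (hαs : αs = ((u - ut) ⬝ᵥ d) / (d ⬝ᵥ H⁻¹.mulVec d))
    (γ : ℝ) (hγ1 : 1 ≤ γ) (hγ2 : γ < 2) :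
    (uα (γ * αs) - ustar) ⬝ᵥ H.mulVec (uα (γ * αs) - ustar)
      ≤ (u - ustar) ⬝ᵥ H.mulVec (u - ustar)
        - γ * (2 - γ) * (1 - η ^ 2) / 4 * ((u - ut) ⬝ᵥ H.mulVec (u - ut)) :=
  ppcm_contraction_general N H hH η hη1 u ut ξ hne d hd hcrit ustar uα hΘΦ αs hαs γ hγ1 hγ2
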